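/- arXiv:2605.19709 — 2 statements merged into one kernel-verified Lean document; each statement's English description precedes it below -/
import Mathlib

section
/- Let Σ be a finite alphabet and let (A_i, B_i) ∈ ℝ^{n×n} × ℝ^{n×m} for i ∈ Σ. The discrete-time control switched system x(k+1) = A_{σ(k)} x(k) + B_{σ(k)} u(k) is mode-independent feedback stabilizable (IFS) if and only if it is current-mode-independent memory-feedback stabilizable (IFS_m). -/
/-!
The nontrivial direction uses the value function `memValue A B γ x`: the infimum of the constants
`c` such that some memory controller started at `x` keeps every solution below `c γ^k`. It lies
between `‖x‖` and `M ‖x‖`. If a controller achieves `c` from `x`, its first input `u` does not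
depend on the mode, and the same controller with `x` and the first mode `i` prepended to its
memory achieves `γ c` from `A_i x + B_i u`. As the infimum need not be attained, this yields a
memoryless feedback contracting the value function only by `(1 + γ) / 2`, which is then a
Lyapunov function.
-/

open Matrix Filter ENNReal

noncomputable section

/-- State history `[x(k), …, x(0)]` of the closed loop driven by the reversed
mode list `[i_{k-1}, …, i_0]`, under a current-mode-independent memory controller `Ψ`. -/
def memHist {n m : ℕ} {S : Type*} (A : S → Matrix (Fin n) (Fin n) ℝ)
    (B : S → Matrix (Fin n) (Fin m) ℝ)
    (Ψ : List (EuclideanSpace ℝ (Fin n)) → List S → EuclideanSpace ℝ (Fin m))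
    (x0 : EuclideanSpace ℝ (Fin n)) : List S → List (EuclideanSpace ℝ (Fin n))
  | [] => [x0]
  | i :: is =>
      (WithLp.toLp 2 ((A i).mulVec ((memHist A B Ψ x0 is).headD 0) +
        (B i).mulVec (Ψ (memHist A B Ψ x0 is) is))) :: memHist A B Ψ x0 is

/-- Closed-loop solution `φ(k, σ, x0, Ψ)` under the switching signal `σ`:
at each step, `Ψ` receives the current and past states `(x(k), …, x(0))`
and the past modes `(σ(k-1), …, σ(0))`. -/
def memTraj {n m : ℕ} {S : Type*} (A : S → Matrix (Fin n) (Fin n) ℝ)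
    (B : S → Matrix (Fin n) (Fin m) ℝ)
    (Ψ : List (EuclideanSpace ℝ (Fin n)) → List S → EuclideanSpace ℝ (Fin m))
    (x0 : EuclideanSpace ℝ (Fin n)) (σ : ℕ → S) (k : ℕ) : EuclideanSpace ℝ (Fin n) :=
  (memHist A B Ψ x0 (((List.range k).reverse).map σ)).headD 0

abbrev switchedStep {n m : ℕ} {S : Type*} (A : S → Matrix (Fin n) (Fin n) ℝ)
    (B : S → Matrix (Fin n) (Fin m) ℝ) (i : S) (x : EuclideanSpace ℝ (Fin n))
    (u : EuclideanSpace ℝ (Fin m)) : EuclideanSpace ℝ (Fin n) :=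
  WithLp.toLp 2 ((A i).mulVec x + (B i).mulVec u)

theorem norm_le_of_lyapunov {E : Type*} [SeminormedAddGroup E] {V : E → ℝ} {M ρ : ℝ}
    (hρ : 0 ≤ ρ) (hV_lower : ∀ y, ‖y‖ ≤ V y) (hV_upper : ∀ y, V y ≤ M * ‖y‖)
    {x : ℕ → E} (hx : ∀ k, V (x (k + 1)) ≤ ρ * V (x k)) (k : ℕ) :
    ‖x k‖ ≤ M * ρ ^ k * ‖x 0‖ := by
  have hdecay : ∀ k, V (x k) ≤ ρ ^ k * V (x 0) := by
    intro k
    induction k with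
    | zero => simp
    | succ k ih =>
      calc V (x (k + 1)) ≤ ρ * V (x k) := hx k
        _ ≤ ρ * (ρ ^ k * V (x 0)) := mul_le_mul_of_nonneg_left ih hρ
        _ = ρ ^ (k + 1) * V (x 0) := by ring
  calc ‖x k‖ ≤ V (x k) := hV_lower _
    _ ≤ ρ ^ k * V (x 0) := hdecay k
    _ ≤ ρ ^ k * (M * ‖x 0‖) := mul_le_mul_of_nonneg_left (hV_upper _) (pow_nonneg hρ k)
    _ = M * ρ ^ k * ‖x 0‖ := by ring

section MemoryTrajectory

variable {n m : ℕ} {S : Type*} (A : S → Matrix (Fin n) (Fin n) ℝ)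
  (B : S → Matrix (Fin n) (Fin m) ℝ)
  (Ψ : List (EuclideanSpace ℝ (Fin n)) → List S → EuclideanSpace ℝ (Fin m))

theorem headD_memHist_append (x0 : EuclideanSpace ℝ (Fin n)) (is : List S)
    (xs : List (EuclideanSpace ℝ (Fin n))) (d : EuclideanSpace ℝ (Fin n)) :
    (memHist A B Ψ x0 is ++ xs).headD d = (memHist A B Ψ x0 is).headD d := by
  cases is <;> rfl

theorem memTraj_zero (x0 : EuclideanSpace ℝ (Fin n)) (σ : ℕ → S) :
    memTraj A B Ψ x0 σ 0 = x0 := rfl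

theorem memTraj_succ (x0 : EuclideanSpace ℝ (Fin n)) (σ : ℕ → S) (k : ℕ) :
    memTraj A B Ψ x0 σ (k + 1) = switchedStep A B (σ k) (memTraj A B Ψ x0 σ k)
      (Ψ (memHist A B Ψ x0 ((List.range k).reverse.map σ)) ((List.range k).reverse.map σ)) := by
  simp only [memTraj, List.range_succ, List.reverse_append, List.reverse_singleton,
    List.singleton_append, List.map_cons]
  rfl

theorem memTraj_memoryless (Φ : EuclideanSpace ℝ (Fin n) → EuclideanSpace ℝ (Fin m))
    (x0 : EuclideanSpace ℝ (Fin n)) (σ : ℕ → S) (k : ℕ) :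
    memTraj A B (fun xs _ => Φ (xs.headD 0)) x0 σ (k + 1) =
      switchedStep A B (σ k) (memTraj A B (fun xs _ => Φ (xs.headD 0)) x0 σ k)
        (Φ (memTraj A B (fun xs _ => Φ (xs.headD 0)) x0 σ k)) :=
  memTraj_succ A B _ x0 σ k

theorem memHist_append_singleton (x0 : EuclideanSpace ℝ (Fin n)) (i : S) (is : List S) :
    memHist A B Ψ x0 (is ++ [i]) =
      memHist A B (fun xs js => Ψ (xs ++ [x0]) (js ++ [i]))
        (switchedStep A B i x0 (Ψ [x0] [])) is ++ [x0] := by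
  induction is with
  | nil => rfl
  | cons j is ih =>
    simp only [List.cons_append, memHist, ih, headD_memHist_append]

theorem memTraj_shift (x0 : EuclideanSpace ℝ (Fin n)) (i : S) (σ : ℕ → S) (k : ℕ) :
    memTraj A B (fun xs js => Ψ (xs ++ [x0]) (js ++ [i]))
      (switchedStep A B i x0 (Ψ [x0] [])) σ k =
    memTraj A B Ψ x0 (fun j => Nat.casesOn j i σ) (k + 1) := by
  have hmodes : (List.range (k + 1)).reverse.map (fun j => Nat.casesOn j i σ : ℕ → S) =
      (List.range k).reverse.map σ ++ [i] := by
    simp [List.range_succ_eq_map, List.map_reverse, List.map_map, Function.comp_def]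
  unfold memTraj
  rw [hmodes, memHist_append_singleton, headD_memHist_append]

theorem memTraj_zero_state (σ : ℕ → S) (k : ℕ) :
    memTraj A B (fun _ _ => 0) 0 σ k = 0 := by
  induction k with
  | zero => rfl
  | succ k ih => simp [memTraj_succ, ih]

end MemoryTrajectory

section ValueFunction

variable {n m : ℕ} {S : Type*} (A : S → Matrix (Fin n) (Fin n) ℝ)
  (B : S → Matrix (Fin n) (Fin m) ℝ) (γ : ℝ)

def memBoundSet (x : EuclideanSpace ℝ (Fin n)) : Set ℝ :=
  {c | ∃ Ψ : List (EuclideanSpace ℝ (Fin n)) → List S → EuclideanSpace ℝ (Fin m),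
    ∀ σ k, ‖memTraj A B Ψ x σ k‖ ≤ c * γ ^ k}

def memValue (x : EuclideanSpace ℝ (Fin n)) : ℝ :=
  sInf (memBoundSet A B γ x)

variable {A B γ}

theorem norm_le_of_mem_memBoundSet [Nonempty S] {x : EuclideanSpace ℝ (Fin n)} {c : ℝ}
    (hc : c ∈ memBoundSet A B γ x) : ‖x‖ ≤ c := by
  obtain ⟨Ψ, hΨ⟩ := hc
  simpa [memTraj_zero] using hΨ (fun _ => Classical.arbitrary S) 0

theorem memValue_le [Nonempty S] {x : EuclideanSpace ℝ (Fin n)} {c : ℝ}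
    (hc : c ∈ memBoundSet A B γ x) : memValue A B γ x ≤ c :=
  csInf_le ⟨‖x‖, fun _ => norm_le_of_mem_memBoundSet⟩ hc

theorem norm_le_memValue [Nonempty S] {x : EuclideanSpace ℝ (Fin n)}
    (hne : (memBoundSet A B γ x).Nonempty) : ‖x‖ ≤ memValue A B γ x :=
  le_csInf hne fun _ => norm_le_of_mem_memBoundSet

variable (A B γ) in
theorem zero_mem_memBoundSet_zero : (0 : ℝ) ∈ memBoundSet A B γ 0 :=
  ⟨fun _ _ => 0, fun σ k => by simp [memTraj_zero_state]⟩

theorem exists_mul_mem_memBoundSet_step {x : EuclideanSpace ℝ (Fin n)} {c : ℝ}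
    (hc : c ∈ memBoundSet A B γ x) :
    ∃ u, ∀ i, γ * c ∈ memBoundSet A B γ (switchedStep A B i x u) := by
  obtain ⟨Ψ, hΨ⟩ := hc
  refine ⟨Ψ [x] [], fun i => ⟨fun xs js => Ψ (xs ++ [x]) (js ++ [i]), fun σ k => ?_⟩⟩
  rw [memTraj_shift]
  calc _ ≤ c * γ ^ (k + 1) := hΨ _ _
    _ = γ * c * γ ^ k := by ring

theorem exists_memValue_step_le [Nonempty S] (hγ₀ : 0 ≤ γ) (hγ₁ : γ ≤ 1) {ρ : ℝ} (hγρ : γ < ρ)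
    {x : EuclideanSpace ℝ (Fin n)} (hne : (memBoundSet A B γ x).Nonempty) :
    ∃ u, ∀ i, memValue A B γ (switchedStep A B i x u) ≤ ρ * memValue A B γ x := by
  rcases eq_or_ne x 0 with rfl | hx
  · refine ⟨0, fun i => ?_⟩
    have hstep : switchedStep A B i 0 0 = 0 := by ext; simp
    have hV₀ : memValue A B γ 0 ≤ 0 := memValue_le (zero_mem_memBoundSet_zero A B γ)
    have hV₀' : 0 ≤ memValue A B γ 0 := by simpa using norm_le_memValue hne
    rw [hstep]
    nlinarith
  · set V := memValue A B γ x
    have hV : 0 < V := (norm_pos_iff.2 hx).trans_le (norm_le_memValue hne)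
    obtain ⟨c, hc, hcV⟩ :=
      exists_lt_of_csInf_lt hne (lt_add_of_pos_right V (mul_pos (sub_pos.2 hγρ) hV))
    obtain ⟨u, hu⟩ := exists_mul_mem_memBoundSet_step hc
    refine ⟨u, fun i => (memValue_le (hu i)).trans ?_⟩
    nlinarith [mul_le_mul_of_nonneg_left hcV.le hγ₀, mul_nonneg (sub_nonneg.2 hγ₁) (sub_pos.2 hγρ).le]

end ValueFunction

theorem ifs_of_ifs_mem {n m : ℕ} {S : Type*} [Nonempty S] {A : S → Matrix (Fin n) (Fin n) ℝ}
    {B : S → Matrix (Fin n) (Fin m) ℝ} {M γ : ℝ} (hγ : γ ∈ Set.Ico (0 : ℝ) 1)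
    {Ψ : List (EuclideanSpace ℝ (Fin n)) → List S → EuclideanSpace ℝ (Fin m)}
    (hΨ : ∀ x0 σ k, ‖memTraj A B Ψ x0 σ k‖ ≤ M * γ ^ k * ‖x0‖) :
    ∃ Φ : EuclideanSpace ℝ (Fin n) → EuclideanSpace ℝ (Fin m),
      ∀ (x : ℕ → EuclideanSpace ℝ (Fin n)) (σ : ℕ → S),
        (∀ k, x (k + 1) = (A (σ k)).mulVec (x k) + (B (σ k)).mulVec (Φ (x k))) →
        ∀ k, ‖x k‖ ≤ M * ((1 + γ) / 2) ^ k * ‖x 0‖ := by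
  have hmem (x : EuclideanSpace ℝ (Fin n)) : M * ‖x‖ ∈ memBoundSet A B γ x :=
    ⟨Ψ, fun σ k => (hΨ x σ k).trans_eq (by ring)⟩
  choose Φ hΦ using fun x => exists_memValue_step_le hγ.1 hγ.2.le
    (show γ < (1 + γ) / 2 by linarith [hγ.2]) ⟨_, hmem x⟩
  refine ⟨Φ, fun x σ hx => norm_le_of_lyapunov (by linarith [hγ.1])
    (fun y => norm_le_memValue ⟨_, hmem y⟩) (fun y => memValue_le (hmem y)) fun k => ?_⟩
  rw [show x (k + 1) = switchedStep A B (σ k) (x k) (Φ (x k)) from congrArg (WithLp.toLp 2) (hx k)]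
  exact hΦ (x k) (σ k)

theorem ifs_iff_ifs_mem_general {n m : ℕ} {S : Type*} [Nonempty S]
    (A : S → Matrix (Fin n) (Fin n) ℝ) (B : S → Matrix (Fin n) (Fin m) ℝ) :
    (∃ M > (0 : ℝ), ∃ γ ∈ Set.Ico (0 : ℝ) 1,
      ∃ Φ : EuclideanSpace ℝ (Fin n) → EuclideanSpace ℝ (Fin m),
        ∀ (x : ℕ → EuclideanSpace ℝ (Fin n)) (σ : ℕ → S),
          (∀ k, x (k + 1) = (A (σ k)).mulVec (x k) + (B (σ k)).mulVec (Φ (x k))) →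
          ∀ k, ‖x k‖ ≤ M * γ ^ k * ‖x 0‖) ↔
    (∃ M > (0 : ℝ), ∃ γ ∈ Set.Ico (0 : ℝ) 1,
      ∃ Ψ : List (EuclideanSpace ℝ (Fin n)) → List S → EuclideanSpace ℝ (Fin m),
        ∀ (x0 : EuclideanSpace ℝ (Fin n)) (σ : ℕ → S) (k : ℕ),
          ‖memTraj A B Ψ x0 σ k‖ ≤ M * γ ^ k * ‖x0‖) := by
  constructor
  · rintro ⟨M, hM, γ, hγ, Φ, hΦ⟩
    refine ⟨M, hM, γ, hγ, fun xs _ => Φ (xs.headD 0), fun x0 σ k => ?_⟩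
    exact hΦ _ σ (fun k => congrArg WithLp.ofLp (memTraj_memoryless A B Φ x0 σ k)) k
  · rintro ⟨M, hM, γ, hγ, Ψ, hΨ⟩
    obtain ⟨Φ, hΦ⟩ := ifs_of_ifs_mem hγ hΨ
    exact ⟨M, hM, (1 + γ) / 2, ⟨by linarith [hγ.1], by linarith [hγ.2]⟩, Φ, hΦ⟩

/-- A switched linear system is mode-independent feedback
stabilizable (IFS) iff it is current-mode-independent memory-feedback stabilizable (IFS_m). -/
theorem ifs_iff_ifs_mem {n m : ℕ} (hn : 0 < n) (hm : 0 < m) {S : Type*} [Fintype S] [Nonempty S]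
    (A : S → Matrix (Fin n) (Fin n) ℝ) (B : S → Matrix (Fin n) (Fin m) ℝ) :
    (∃ M > (0 : ℝ), ∃ γ ∈ Set.Ico (0 : ℝ) 1,
      ∃ Φ : EuclideanSpace ℝ (Fin n) → EuclideanSpace ℝ (Fin m),
        ∀ (x : ℕ → EuclideanSpace ℝ (Fin n)) (σ : ℕ → S),
          (∀ k, x (k + 1) = (A (σ k)).mulVec (x k) + (B (σ k)).mulVec (Φ (x k))) →
          ∀ k, ‖x k‖ ≤ M * γ ^ k * ‖x 0‖) ↔
    (∃ M > (0 : ℝ), ∃ γ ∈ Set.Ico (0 : ℝ) 1,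
      ∃ Ψ : List (EuclideanSpace ℝ (Fin n)) → List S → EuclideanSpace ℝ (Fin m),
        ∀ (x0 : EuclideanSpace ℝ (Fin n)) (σ : ℕ → S) (k : ℕ),
          ‖memTraj A B Ψ x0 σ k‖ ≤ M * γ ^ k * ‖x0‖) :=
  ifs_iff_ifs_mem_general A B
end
end

section
/- Let Σ be a finite alphabet, (A_i, B_i) ∈ ℝ^{n×n} × ℝ^{n×m} for i ∈ Σ, and let V : ℝⁿ → ℝ be any norm on ℝⁿ. Then for every x ∈ ℝⁿ, the function W(u) = max_{i ∈ Σ} V(A_i x + B_i u) attains its infimum over u ∈ ℝ^m; that is, there exists u* ∈ ℝ^m with W(u*) = inf_{u ∈ ℝ^m} W(u). -/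
open Filter

/-!
Write `W u = q (a + L u)` with `q w = max_i V (w i)`, `a = (A_i x)_i` and `L u = (B_i u)_i`.
On the finite-dimensional space `Σ → ℝⁿ` the norm `q` is continuous, being convex, and it
dominates a multiple of the Euclidean norm, by compactness of the unit sphere. Hence
`v ↦ q (a + v)` is continuous and coercive, so it attains its minimum on the closed subspace
`range L`.
-/

namespace Seminorm

variable {𝕜 E : Type*} [NormedField 𝕜] [AddCommGroup E] [Module 𝕜 E]

noncomputable def piSup (p : Seminorm 𝕜 E) (ι : Type*) [Finite ι] : Seminorm 𝕜 (ι → E) :=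
  ⨆ i, p.comp (LinearMap.proj i)

theorem piSup_apply (p : Seminorm 𝕜 E) {ι : Type*} [Finite ι] (w : ι → E) :
    p.piSup ι w = ⨆ i, p (w i) :=
  Seminorm.iSup_apply (Set.finite_range _).bddAbove

theorem piSup_pos (p : Seminorm 𝕜 E) {ι : Type*} [Finite ι] (hp : ∀ x, x ≠ 0 → 0 < p x)
    (w : ι → E) (hw : w ≠ 0) : 0 < p.piSup ι w := by
  obtain ⟨i, hi⟩ := Function.ne_iff.mp hw
  rw [piSup_apply]
  exact (hp _ hi).trans_le (le_ciSup (f := fun i ↦ p (w i)) (Set.finite_range _).bddAbove i)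

variable {E : Type*} [NormedAddCommGroup E] [NormedSpace ℝ E] [FiniteDimensional ℝ E]

protected theorem continuous_of_finiteDimensional (p : Seminorm ℝ E) : Continuous p := by
  simpa [continuousOn_univ] using p.convexOn.continuousOn_interior

theorem exists_pos_mul_norm_le (p : Seminorm ℝ E) (hp : ∀ x, x ≠ 0 → 0 < p x) :
    ∃ c > 0, ∀ x, c * ‖x‖ ≤ p x := by
  cases subsingleton_or_nontrivial E with
  | inl _ => exact ⟨1, one_pos, fun x ↦ by simp [Subsingleton.elim x 0]⟩
  | inr _ =>
    obtain ⟨y, hy, hmin⟩ := (isCompact_sphere (0 : E) 1).exists_isMinOn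
      (NormedSpace.sphere_nonempty.mpr zero_le_one) p.continuous_of_finiteDimensional.continuousOn
    refine ⟨p y, hp y (Metric.ne_of_mem_sphere hy one_ne_zero), fun x ↦ ?_⟩
    rcases eq_or_ne x 0 with rfl | hx
    · simp
    have hx' : 0 < ‖x‖ := norm_pos_iff.mpr hx
    have hunit : ‖x‖⁻¹ • x ∈ Metric.sphere (0 : E) 1 := by
      simp [norm_smul, hx'.ne']
    calc p y * ‖x‖ ≤ p (‖x‖⁻¹ • x) * ‖x‖ := by gcongr; exact hmin hunit
      _ = p x := by rw [map_smul_eq_mul, norm_inv, norm_norm]; field_simp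

theorem tendsto_const_add_cocompact_atTop (p : Seminorm ℝ E) (hp : ∀ x, x ≠ 0 → 0 < p x)
    (a : E) :
    Tendsto (fun v ↦ p (a + v)) (cocompact E) atTop := by
  obtain ⟨c, hc, hle⟩ := p.exists_pos_mul_norm_le hp
  have hlow : ∀ v, c * ‖v‖ - p a ≤ p (a + v) := fun v ↦ by
    have := map_sub_le_add p (a + v) a
    rw [add_sub_cancel_left] at this
    linarith [hle v]
  refine tendsto_atTop_mono hlow ?_
  exact tendsto_atTop_add_const_right _ _ (tendsto_norm_cocompact_atTop.const_mul_atTop hc)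

end Seminorm

theorem LinearMap.exists_forall_le_comp_of_tendsto_cocompact {G F : Type*} [AddCommGroup G]
    [Module ℝ G] [NormedAddCommGroup F] [NormedSpace ℝ F] [FiniteDimensional ℝ F]
    (L : G →ₗ[ℝ] F) {f : F → ℝ} (hf : Continuous f) (hcoer : Tendsto f (cocompact F) atTop) :
    ∃ u, ∀ u', f (L u) ≤ f (L u') := by
  obtain ⟨_, ⟨u, rfl⟩, hmin⟩ := hf.continuousOn.exists_isMinOn'
    (LinearMap.range L).closed_of_finiteDimensional (LinearMap.range L).zero_mem
    ((hcoer.eventually (eventually_ge_atTop (f 0))).filter_mono inf_le_left)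
  exact ⟨u, fun u' ↦ hmin ⟨u', rfl⟩⟩

theorem inf_attained_general {n m : ℕ} {S : Type*} [Fintype S]
    (A : S → Matrix (Fin n) (Fin n) ℝ) (B : S → Matrix (Fin n) (Fin m) ℝ)
    (V : EuclideanSpace ℝ (Fin n) → ℝ)
    (hpos : ∀ x : EuclideanSpace ℝ (Fin n), x ≠ 0 → 0 < V x)
    (hhom : ∀ (lam : ℝ) (x : EuclideanSpace ℝ (Fin n)), V (lam • x) = |lam| * V x)
    (hadd : ∀ x y : EuclideanSpace ℝ (Fin n), V (x + y) ≤ V x + V y) :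
    ∀ x : EuclideanSpace ℝ (Fin n),
      ∃ ustar : EuclideanSpace ℝ (Fin m),
        (⨆ i : S, V (WithLp.toLp 2 ((A i).mulVec x + (B i).mulVec ustar))) =
        ⨅ u : EuclideanSpace ℝ (Fin m),
          ⨆ i : S, V (WithLp.toLp 2 ((A i).mulVec x + (B i).mulVec u)) := by
  intro x
  let p : Seminorm ℝ (EuclideanSpace ℝ (Fin n)) :=
    Seminorm.of V hadd fun r y ↦ by rw [hhom, Real.norm_eq_abs]
  let a : S → EuclideanSpace ℝ (Fin n) := fun i ↦ WithLp.toLp 2 ((A i).mulVec x)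
  let L : EuclideanSpace ℝ (Fin m) →ₗ[ℝ] S → EuclideanSpace ℝ (Fin n) :=
    LinearMap.pi fun i ↦ (B i).toEuclideanLin
  have hW : ∀ u : EuclideanSpace ℝ (Fin m),
      (⨆ i, V (WithLp.toLp 2 ((A i).mulVec x + (B i).mulVec u))) = p.piSup S (a + L u) :=
    fun u ↦ (p.piSup_apply _).symm
  obtain ⟨ustar, hmin⟩ := L.exists_forall_le_comp_of_tendsto_cocompact
    ((p.piSup S).continuous_of_finiteDimensional.comp (continuous_const_add a))
    ((p.piSup S).tendsto_const_add_cocompact_atTop (p.piSup_pos hpos) a)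
  refine ⟨ustar, ?_⟩
  simp only [hW]
  exact (ciInf_eq_of_forall_ge_of_forall_gt_exists_lt hmin fun _ hw ↦ ⟨ustar, hw⟩).symm

/-- For any norm `V` on `ℝⁿ` and any `x`, the function
`W(u) = max_i V(A_i x + B_i u)` attains its infimum over `u ∈ ℝᵐ`. -/
theorem inf_attained {n m : ℕ} (hn : 0 < n) (hm : 0 < m) {S : Type*} [Fintype S] [Nonempty S]
    (A : S → Matrix (Fin n) (Fin n) ℝ) (B : S → Matrix (Fin n) (Fin m) ℝ)
    (V : EuclideanSpace ℝ (Fin n) → ℝ)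
    (hpos : ∀ x : EuclideanSpace ℝ (Fin n), x ≠ 0 → 0 < V x)
    (hhom : ∀ (lam : ℝ) (x : EuclideanSpace ℝ (Fin n)), V (lam • x) = |lam| * V x)
    (hadd : ∀ x y : EuclideanSpace ℝ (Fin n), V (x + y) ≤ V x + V y) :
    ∀ x : EuclideanSpace ℝ (Fin n),
      ∃ ustar : EuclideanSpace ℝ (Fin m),
        (⨆ i : S, V (WithLp.toLp 2 ((A i).mulVec x + (B i).mulVec ustar))) =
        ⨅ u : EuclideanSpace ℝ (Fin m),
          ⨆ i : S, V (WithLp.toLp 2 ((A i).mulVec x + (B i).mulVec u)) :=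
  inf_attained_general A B V hpos hhom hadd
end
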